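/- Let n ≥ 1. In the polynomial ring ℤ[t] one has Σ_{Ψ ∈ Υ} t^{|Ψ|} = ∏_{k=1}^{n} (1 + t^k); equivalently, for every i ≥ 0, the number of Ψ ∈ Υ with |Ψ| = i equals the coefficient of tⁱ in ∏_{k=1}^{n} (1 + t^k). -/

import Mathlib

/-!
A root `eᵢ - eⱼ` cannot lie in `Ψ ∈ Υ`: adding `2eⱼ` would put `eᵢ + eⱼ` in `Ψ`, and then
`(eᵢ - eⱼ) + (eᵢ + eⱼ) = 2eᵢ` would be a root in `Ψ + Ψ`. So `Ψ` is the set of roots `eᵢ + eⱼ`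
over a set `D` of cells `(i, j)`, `i ≤ j`, and the ideal condition says precisely that `D` is
closed under decreasing either coordinate: `D` is a shifted Young diagram, i.e. the diagram of a
strict partition with parts in `{1, …, n}`, and `|Ψ|` is the sum of the parts; such partitions
are counted by `∏ₖ (1 + tᵏ)`. The partition is recovered from `D` through its diagonals: the
`d`-th diagonal `{(i, i + d)}` of `D` is an initial segment whose length is the number of parts
exceeding `d`.
-/

open Pointwise Polynomial

/-- The `i`-th standard basis vector of `ℤⁿ`. -/
def stdBasis (n : ℕ) (i : Fin n) : Fin n → ℤ := Pi.single i 1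

/-- The positive roots of type `Cₙ`: `eᵢ - eⱼ` for `i < j` and `eᵢ + eⱼ` for `i ≤ j`. -/
def PhiPos (n : ℕ) : Set (Fin n → ℤ) :=
  {v | ∃ i j : Fin n, i < j ∧ v = stdBasis n i - stdBasis n j} ∪
  {v | ∃ i j : Fin n, i ≤ j ∧ v = stdBasis n i + stdBasis n j}

/-- The collection `Υ` of combinatorial abelian ideals. -/
def Upsilon (n : ℕ) : Set (Set (Fin n → ℤ)) :=
  {Ψ | Ψ ⊆ PhiPos n ∧ (Ψ + PhiPos n) ∩ PhiPos n ⊆ Ψ ∧ (Ψ + Ψ) ∩ PhiPos n = ∅}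

open Finset

variable {n : ℕ}

def IsShiftedDiagram (D : Finset (Fin n × Fin n)) : Prop :=
  ∀ p ∈ D, p.1 ≤ p.2 ∧ ∀ q : Fin n × Fin n, q ≤ p → q.1 ≤ q.2 → q ∈ D

/-- `S` encodes the strict partition with parts `s + 1` for `s ∈ S`; `tailCard S d` counts its
parts exceeding `d`, which is the length of the `d`-th diagonal of its shifted diagram. -/
def tailCard (S : Finset (Fin n)) (d : ℕ) : ℕ := #{s ∈ S | d ≤ s.val}

lemma card_filter_val_mem_Ico_le (S : Finset (Fin n)) (a b : ℕ) :
    #{s ∈ S | s.val ∈ Ico a b} ≤ b - a := by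
  rw [← Nat.card_Ico]
  exact card_le_card_of_injOn Fin.val (fun s hs => (mem_filter.mp hs).2)
    Fin.val_injective.injOn

lemma tailCard_le (S : Finset (Fin n)) (d : ℕ) : tailCard S d ≤ n - d := by
  refine le_trans (le_of_eq ?_) (card_filter_val_mem_Ico_le S d n)
  simp only [tailCard, mem_Ico, Fin.is_lt, and_true]

lemma tailCard_le_tailCard_add (S : Finset (Fin n)) (d d' : ℕ) :
    tailCard S d ≤ tailCard S d' + (d' - d) := by
  calc tailCard S d ≤ #({s ∈ S | d' ≤ s.val} ∪ {s ∈ S | s.val ∈ Ico d d'}) := by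
        refine card_le_card fun s hs => ?_
        simp only [mem_filter, mem_union, mem_Ico] at hs ⊢
        exact (le_or_gt d' s).imp (fun h => ⟨hs.1, h⟩) (fun h => ⟨hs.1, hs.2, h⟩)
    _ ≤ tailCard S d' + (d' - d) :=
        (card_union_le _ _).trans (Nat.add_le_add_left (card_filter_val_mem_Ico_le S d d') _)

lemma tailCard_eq (S : Finset (Fin n)) {d : ℕ} (hd : d < n) :
    tailCard S d = tailCard S (d + 1) + if ⟨d, hd⟩ ∈ S then 1 else 0 := by
  simp only [tailCard, card_filter, ← sum_ite_eq' S ⟨d, hd⟩ (fun _ => (1 : ℕ)),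
    ← sum_add_distrib]
  refine sum_congr rfl fun s _ => ?_
  simp only [Fin.ext_iff]
  split_ifs <;> omega

lemma mem_iff_tailCard_lt (S : Finset (Fin n)) (s : Fin n) :
    s ∈ S ↔ tailCard S (s + 1) < tailCard S s := by
  rw [tailCard_eq S s.isLt, Fin.eta]
  split_ifs <;> simp [*]

lemma sum_range_tailCard (S : Finset (Fin n)) :
    ∑ d ∈ range n, tailCard S d = ∑ s ∈ S, ((s : ℕ) + 1) := by
  simp only [tailCard, card_filter]
  rw [sum_comm]
  refine sum_congr rfl fun s _ => ?_
  rw [← card_filter, ← card_range (s + 1)]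
  congr 1
  ext d
  simp only [mem_filter, mem_range]
  omega

def shiftedDiagram (S : Finset (Fin n)) : Finset (Fin n × Fin n) :=
  {p | p.1 ≤ p.2 ∧ (p.1 : ℕ) < tailCard S (p.2 - p.1)}

lemma isShiftedDiagram_shiftedDiagram (S : Finset (Fin n)) :
    IsShiftedDiagram (shiftedDiagram S) := by
  intro p hp
  simp only [shiftedDiagram, mem_filter, mem_univ, true_and] at hp ⊢
  refine ⟨hp.1, fun q hqp hq => ⟨hq, ?_⟩⟩
  have := tailCard_le_tailCard_add S (p.2 - p.1) (q.2 - q.1)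
  have := tailCard_le_tailCard_add S (q.2 - q.1) (p.2 - p.1)
  have := hqp.1
  have := hqp.2
  omega

def diagLen (D : Finset (Fin n × Fin n)) (d : ℕ) : ℕ :=
  #{i : Fin n | ∃ j : Fin n, (j : ℕ) = i + d ∧ (i, j) ∈ D}

lemma diagLen_eq_zero_of_le {D : Finset (Fin n × Fin n)} {d : ℕ} (hd : n ≤ d) :
    diagLen D d = 0 := by
  simp only [diagLen, card_eq_zero, filter_eq_empty_iff, mem_univ, true_implies]
  rintro i ⟨j, hj, -⟩
  omega

lemma diagLen_shiftedDiagram (S : Finset (Fin n)) (d : ℕ) :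
    diagLen (shiftedDiagram S) d = tailCard S d := by
  have hS := tailCard_le S d
  have mem_diagonal (i : Fin n) :
      (∃ j : Fin n, (j : ℕ) = i + d ∧ (i, j) ∈ shiftedDiagram S) ↔ (i : ℕ) < tailCard S d := by
    simp only [shiftedDiagram, mem_filter, mem_univ, true_and]
    constructor
    · rintro ⟨j, hj, -, hi⟩
      rwa [hj, Nat.add_sub_cancel_left] at hi
    · intro hi
      exact ⟨⟨i + d, by omega⟩, rfl, by simp only [Fin.le_def]; omega, by simpa using hi⟩
  simp only [diagLen, mem_diagonal, Fin.card_filter_val_lt]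
  omega

def partsOf (D : Finset (Fin n × Fin n)) : Finset (Fin n) :=
  {s | diagLen D (s + 1) < diagLen D s}

lemma partsOf_shiftedDiagram (S : Finset (Fin n)) : partsOf (shiftedDiagram S) = S := by
  ext s
  simp [partsOf, diagLen_shiftedDiagram, ← mem_iff_tailCard_lt]

namespace IsShiftedDiagram

variable {D : Finset (Fin n × Fin n)}

lemma le_of_mem (hD : IsShiftedDiagram D) {i j : Fin n} (h : (i, j) ∈ D) : i ≤ j :=
  (hD _ h).1

lemma mem_of_le (hD : IsShiftedDiagram D) {i j i' j' : Fin n} (h : (i, j) ∈ D)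
    (hi : i' ≤ i) (hj : j' ≤ j) (hij : i' ≤ j') : (i', j') ∈ D :=
  (hD _ h).2 (i', j') ⟨hi, hj⟩ hij

lemma lt_diagLen_iff (hD : IsShiftedDiagram D) (d : ℕ) (i : Fin n) :
    (i : ℕ) < diagLen D d ↔ ∃ j : Fin n, (j : ℕ) = i + d ∧ (i, j) ∈ D := by
  refine Fin.lt_card_filter_univ_iff_apply_of_imp _ fun i i' hi' ⟨j, hj, hij⟩ => ?_
  exact ⟨⟨i' + d, by omega⟩, rfl,
    hD.mem_of_le hij hi' (by simp only [Fin.le_def]; omega) (by simp only [Fin.le_def]; omega)⟩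

lemma mem_iff_lt_diagLen (hD : IsShiftedDiagram D) {d : ℕ} {i j : Fin n}
    (hij : (j : ℕ) = i + d) : (i, j) ∈ D ↔ (i : ℕ) < diagLen D d := by
  rw [hD.lt_diagLen_iff]
  exact ⟨fun h => ⟨j, hij, h⟩, fun ⟨j', hj', h⟩ => Fin.ext (hij.trans hj'.symm) ▸ h⟩

lemma diagLen_succ_le (hD : IsShiftedDiagram D) (d : ℕ) : diagLen D (d + 1) ≤ diagLen D d := by
  refine card_le_card fun i => ?_
  simp only [mem_filter, mem_univ, true_and]
  rintro ⟨j, hj, hij⟩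
  exact ⟨⟨i + d, by omega⟩, rfl,
    hD.mem_of_le hij le_rfl (by simp only [Fin.le_def]; omega) (by simp only [Fin.le_def]; omega)⟩

lemma diagLen_le_succ_add_one (hD : IsShiftedDiagram D) (d : ℕ) :
    diagLen D d ≤ diagLen D (d + 1) + 1 := by
  by_contra! h
  have hn : diagLen D d ≤ n := (card_filter_le _ _).trans_eq (card_fin n)
  obtain ⟨j, hj, hij⟩ := (hD.lt_diagLen_iff d ⟨diagLen D d - 1, by omega⟩).mp (by simp; omega)
  have hlow : ((⟨diagLen D d - 2, by omega⟩ : Fin n), j) ∈ D :=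
    hD.mem_of_le hij (by simp only [Fin.le_def]; omega) le_rfl
      (by simp only [Fin.le_def] at hj ⊢; omega)
  have := (hD.mem_iff_lt_diagLen (d := d + 1) (by simp only at hj ⊢; omega)).mp hlow
  simp only at this
  omega

lemma card_eq_sum_diagLen (hD : IsShiftedDiagram D) : #D = ∑ d ∈ range n, diagLen D d := by
  rw [card_eq_sum_card_fiberwise (f := fun p => (p.2 : ℕ) - p.1) (t := range n)
    fun p _ => mem_range.mpr (lt_of_le_of_lt (Nat.sub_le _ _) p.2.isLt)]
  refine sum_congr rfl fun d _ => card_bij (fun p _ => p.1) ?_ ?_ ?_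
  · rintro ⟨i, j⟩ hp
    simp only [mem_filter, mem_univ, true_and] at hp ⊢
    have := hD.le_of_mem hp.1
    exact ⟨j, by omega, hp.1⟩
  · rintro ⟨i, j⟩ hp ⟨i', j'⟩ hp' (rfl : i = i')
    simp only [mem_filter] at hp hp'
    have := hD.le_of_mem hp.1
    have := hD.le_of_mem hp'.1
    simp only [Prod.mk.injEq, true_and]
    omega
  · intro i hi
    simp only [mem_filter, mem_univ, true_and] at hi
    obtain ⟨j, hj, hij⟩ := hi
    exact ⟨(i, j), mem_filter.mpr ⟨hij, by simp only; omega⟩, rfl⟩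

lemma tailCard_partsOf (hD : IsShiftedDiagram D) (d : ℕ) :
    tailCard (partsOf D) d = diagLen D d := by
  induction h : n - d generalizing d with
  | zero =>
    have := tailCard_le (partsOf D) d
    rw [diagLen_eq_zero_of_le (by omega)]
    omega
  | succ k ih =>
    have hd : d < n := by omega
    have := hD.diagLen_succ_le d
    have := hD.diagLen_le_succ_add_one d
    rw [tailCard_eq _ hd, ih (d + 1) (by omega)]
    simp only [partsOf, mem_filter, mem_univ, true_and]
    split_ifs <;> omega

lemma shiftedDiagram_partsOf (hD : IsShiftedDiagram D) : shiftedDiagram (partsOf D) = D := by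
  ext ⟨i, j⟩
  simp only [shiftedDiagram, mem_filter, mem_univ, true_and, hD.tailCard_partsOf]
  constructor
  · rintro ⟨hij, hi⟩
    exact (hD.mem_iff_lt_diagLen (by omega)).mpr hi
  · intro h
    have hij := hD.le_of_mem h
    exact ⟨hij, (hD.mem_iff_lt_diagLen (by omega)).mp h⟩

end IsShiftedDiagram

lemma card_shiftedDiagram (S : Finset (Fin n)) :
    #(shiftedDiagram S) = ∑ s ∈ S, ((s : ℕ) + 1) := by
  simp only [(isShiftedDiagram_shiftedDiagram S).card_eq_sum_diagLen, diagLen_shiftedDiagram,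
    sum_range_tailCard]

def sumRoot (p : Fin n × Fin n) : Fin n → ℤ := stdBasis n p.1 + stdBasis n p.2

lemma stdBasis_apply (i x : Fin n) : stdBasis n i x = if x = i then 1 else 0 := by
  simp [stdBasis, Pi.single_apply]

lemma sum_stdBasis (i : Fin n) : ∑ x, stdBasis n i x = 1 := by
  simp [stdBasis_apply]

lemma sum_sumRoot (p : Fin n × Fin n) : ∑ x, sumRoot p x = 2 := by
  simp [sumRoot, sum_add_distrib, sum_stdBasis]

lemma sumRoot_apply_nonneg (p : Fin n × Fin n) (x : Fin n) : 0 ≤ sumRoot p x := by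
  simp only [sumRoot, Pi.add_apply, stdBasis_apply]
  split_ifs <;> norm_num

lemma sumRoot_swap (i j : Fin n) : sumRoot (j, i) = sumRoot (i, j) := add_comm _ _

lemma sumRoot_mem_PhiPos (i j : Fin n) : sumRoot (i, j) ∈ PhiPos n := by
  rcases le_total i j with h | h
  · exact Or.inr ⟨i, j, h, rfl⟩
  · exact sumRoot_swap i j ▸ Or.inr ⟨j, i, h, rfl⟩

lemma stdBasis_sub_mem_PhiPos {i j : Fin n} (h : i < j) :
    stdBasis n i - stdBasis n j ∈ PhiPos n :=
  Or.inl ⟨i, j, h, rfl⟩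

lemma mem_PhiPos_iff {v : Fin n → ℤ} : v ∈ PhiPos n ↔
    (∃ i j : Fin n, i < j ∧ v = stdBasis n i - stdBasis n j) ∨
      ∃ p : Fin n × Fin n, p.1 ≤ p.2 ∧ v = sumRoot p := by
  simp [PhiPos, sumRoot]

lemma sum_eq_zero_or_two_of_mem_PhiPos {v : Fin n → ℤ} (hv : v ∈ PhiPos n) :
    ∑ x, v x = 0 ∨ ∑ x, v x = 2 := by
  rcases mem_PhiPos_iff.mp hv with ⟨i, j, -, rfl⟩ | ⟨p, -, rfl⟩
  · simp [sum_sub_distrib, sum_stdBasis]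
  · exact Or.inr (sum_sumRoot p)

lemma sumRoot_add_not_mem_PhiPos (p q : Fin n × Fin n) : sumRoot p + sumRoot q ∉ PhiPos n := by
  intro h
  have := sum_eq_zero_or_two_of_mem_PhiPos h
  simp only [Pi.add_apply, sum_add_distrib, sum_sumRoot] at this
  omega

lemma exists_sumRoot_of_mem_PhiPos {v : Fin n → ℤ} (hv : v ∈ PhiPos n) (h : ∑ x, v x = 2) :
    ∃ p : Fin n × Fin n, p.1 ≤ p.2 ∧ v = sumRoot p := by
  rcases mem_PhiPos_iff.mp hv with ⟨i, j, -, rfl⟩ | hp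
  · simp [sum_sub_distrib, sum_stdBasis] at h
  · exact hp

lemma sumRoot_injOn : Set.InjOn (sumRoot (n := n)) {p | p.1 ≤ p.2} := by
  have stdBasis_inj {i j : Fin n} (h : stdBasis n i = stdBasis n j) : i = j := by
    simpa [stdBasis_apply] using congrFun h i
  rintro ⟨i, j⟩ hij ⟨k, l⟩ hkl h
  simp only [Set.mem_ofPred_eq, sumRoot] at hij hkl h
  have hi : i = k ∨ i = l := by
    have := congrFun h i
    simp only [Pi.add_apply, stdBasis_apply] at this
    split_ifs at this <;> simp_all
  rcases hi with rfl | rfl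
  · rw [stdBasis_inj (add_left_cancel h)]
  · rw [add_comm (stdBasis n k)] at h
    obtain rfl := stdBasis_inj (add_left_cancel h)
    rw [le_antisymm hij hkl]

lemma IsShiftedDiagram.sumRoot_add_mem_image {D : Finset (Fin n × Fin n)}
    (hD : IsShiftedDiagram D) {i j k l : Fin n} (hp : (i, j) ∈ D) (hkl : k < l)
    (hw : sumRoot (i, j) + (stdBasis n k - stdBasis n l) ∈ PhiPos n) :
    sumRoot (i, j) + (stdBasis n k - stdBasis n l) ∈ sumRoot '' (D : Set (Fin n × Fin n)) := by
  obtain ⟨q, -, hq⟩ := exists_sumRoot_of_mem_PhiPos hw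
    (by simp [sum_add_distrib, sum_sub_distrib, sum_sumRoot, sum_stdBasis])
  -- `sumRoot q` has no negative coordinate, so `-eₗ` must cancel against `eᵢ` or `eⱼ`
  have hl : l = i ∨ l = j := by
    have := sumRoot_apply_nonneg q l
    rw [← hq] at this
    simp only [sumRoot, Pi.add_apply, Pi.sub_apply, stdBasis_apply, if_neg hkl.ne'] at this
    split_ifs at this <;> simp_all
  have hij := hD.le_of_mem hp
  rcases hl with rfl | rfl
  · exact ⟨(k, j), hD.mem_of_le hp (by omega) le_rfl (by omega), by simp only [sumRoot]; abel⟩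
  · rcases le_total i k with hik | hki
    · exact ⟨(i, k), hD.mem_of_le hp le_rfl (by omega) (by omega), by simp only [sumRoot]; abel⟩
    · exact ⟨(k, i), hD.mem_of_le hp (by omega) (by omega) (by omega),
        by simp only [sumRoot]; abel⟩

lemma sumRoot_image_mem_Upsilon {D : Finset (Fin n × Fin n)} (hD : IsShiftedDiagram D) :
    sumRoot '' (D : Set (Fin n × Fin n)) ∈ Upsilon n := by
  refine ⟨?_, ?_, ?_⟩
  · rintro _ ⟨p, -, rfl⟩
    exact sumRoot_mem_PhiPos p.1 p.2
  · rintro _ ⟨⟨_, ⟨⟨i, j⟩, hp, rfl⟩, α, hα, rfl⟩, hw⟩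
    rcases mem_PhiPos_iff.mp hα with ⟨k, l, hkl, rfl⟩ | ⟨q, -, rfl⟩
    · exact hD.sumRoot_add_mem_image hp hkl hw
    · exact absurd hw (sumRoot_add_not_mem_PhiPos _ _)
  · rw [Set.eq_empty_iff_forall_notMem]
    rintro _ ⟨⟨_, ⟨p, -, rfl⟩, _, ⟨q, -, rfl⟩, rfl⟩, hw⟩
    exact sumRoot_add_not_mem_PhiPos p q hw

section Upsilon

variable {Ψ : Set (Fin n → ℤ)}

lemma add_mem_of_mem_Upsilon (hΨ : Ψ ∈ Upsilon n) {v α : Fin n → ℤ} (hv : v ∈ Ψ)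
    (hα : α ∈ PhiPos n) (h : v + α ∈ PhiPos n) : v + α ∈ Ψ :=
  hΨ.2.1 ⟨Set.add_mem_add hv hα, h⟩

lemma exists_sumRoot_eq_of_mem_Upsilon (hΨ : Ψ ∈ Upsilon n) {v : Fin n → ℤ} (hv : v ∈ Ψ) :
    ∃ p : Fin n × Fin n, p.1 ≤ p.2 ∧ v = sumRoot p := by
  rcases mem_PhiPos_iff.mp (hΨ.1 hv) with ⟨i, j, hij, rfl⟩ | hp
  · exfalso
    have hsum : stdBasis n i - stdBasis n j + sumRoot (j, j) = sumRoot (i, j) := by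
      simp only [sumRoot]; abel
    have hij' : sumRoot (i, j) ∈ Ψ := hsum ▸
      add_mem_of_mem_Upsilon hΨ hv (sumRoot_mem_PhiPos j j) (hsum ▸ sumRoot_mem_PhiPos i j)
    have hii : stdBasis n i - stdBasis n j + sumRoot (i, j) = sumRoot (i, i) := by
      simp only [sumRoot]; abel
    have h2ii := Set.mem_inter (Set.add_mem_add hv hij') (hii ▸ sumRoot_mem_PhiPos i i)
    rwa [hΨ.2.2] at h2ii
  · exact hp

lemma sumRoot_mem_of_mem_Upsilon (hΨ : Ψ ∈ Upsilon n) {i j i' j' : Fin n}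
    (h : sumRoot (i, j) ∈ Ψ) (hi : i' ≤ i) (hj : j' ≤ j) : sumRoot (i', j') ∈ Ψ := by
  have lower_snd {i j k : Fin n} (h : sumRoot (i, j) ∈ Ψ) (hkj : k ≤ j) : sumRoot (i, k) ∈ Ψ := by
    rcases hkj.lt_or_eq with hkj | rfl
    · have hsum : sumRoot (i, j) + (stdBasis n k - stdBasis n j) = sumRoot (i, k) := by
        simp only [sumRoot]; abel
      exact hsum ▸ add_mem_of_mem_Upsilon hΨ h (stdBasis_sub_mem_PhiPos hkj)
        (hsum ▸ sumRoot_mem_PhiPos i k)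
    · exact h
  have := lower_snd h hj
  rw [sumRoot_swap] at this ⊢
  exact lower_snd this hi

lemma exists_isShiftedDiagram_of_mem_Upsilon (hΨ : Ψ ∈ Upsilon n) :
    ∃ D : Finset (Fin n × Fin n),
      IsShiftedDiagram D ∧ sumRoot '' (D : Set (Fin n × Fin n)) = Ψ := by
  classical
  refine ⟨({p | p.1 ≤ p.2 ∧ sumRoot p ∈ Ψ} : Finset _), fun p hp => ?_, ?_⟩
  · simp only [mem_filter, mem_univ, true_and] at hp ⊢
    exact ⟨hp.1, fun q hqp hq => ⟨hq, sumRoot_mem_of_mem_Upsilon hΨ hp.2 hqp.1 hqp.2⟩⟩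
  · ext v
    simp only [coe_filter, mem_univ, true_and, Set.mem_image, Set.mem_ofPred_eq]
    constructor
    · rintro ⟨p, ⟨-, hp⟩, rfl⟩
      exact hp
    · intro hv
      obtain ⟨p, hp, rfl⟩ := exists_sumRoot_eq_of_mem_Upsilon hΨ hv
      exact ⟨p, ⟨hp, hv⟩, rfl⟩

end Upsilon

def rootIdeal (S : Finset (Fin n)) : Set (Fin n → ℤ) :=
  sumRoot '' (shiftedDiagram S : Set (Fin n × Fin n))

lemma Upsilon_eq_range_rootIdeal : Upsilon n = Set.range (rootIdeal (n := n)) := by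
  ext Ψ
  constructor
  · intro hΨ
    obtain ⟨D, hD, rfl⟩ := exists_isShiftedDiagram_of_mem_Upsilon hΨ
    exact ⟨partsOf D, by rw [rootIdeal, hD.shiftedDiagram_partsOf]⟩
  · rintro ⟨S, rfl⟩
    exact sumRoot_image_mem_Upsilon (isShiftedDiagram_shiftedDiagram S)

lemma coe_shiftedDiagram_subset (S : Finset (Fin n)) :
    (shiftedDiagram S : Set (Fin n × Fin n)) ⊆ {p | p.1 ≤ p.2} :=
  fun p hp => (isShiftedDiagram_shiftedDiagram S p hp).1

lemma ncard_rootIdeal (S : Finset (Fin n)) : (rootIdeal S).ncard = ∑ s ∈ S, ((s : ℕ) + 1) := by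
  rw [rootIdeal, (sumRoot_injOn.mono (coe_shiftedDiagram_subset S)).ncard_image,
    Set.ncard_coe_finset, card_shiftedDiagram]

lemma rootIdeal_injective : Function.Injective (rootIdeal (n := n)) := by
  intro A B h
  have := (sumRoot_injOn.image_eq_image_iff (coe_shiftedDiagram_subset A)
    (coe_shiftedDiagram_subset B)).mp h
  rw [← partsOf_shiftedDiagram A, ← partsOf_shiftedDiagram B, coe_inj.mp this]

lemma coeff_prod_one_add_X_pow (n k : ℕ) :
    (∏ m ∈ range n, (1 + (X : ℤ[X]) ^ (m + 1))).coeff k =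
      #{S : Finset (Fin n) | ∑ s ∈ S, ((s : ℕ) + 1) = k} := by
  rw [← Fin.prod_univ_eq_prod_range (fun m => 1 + (X : ℤ[X]) ^ (m + 1)), prod_one_add,
    finsetSum_coeff]
  simp only [prod_pow_eq_pow_sum, coeff_X_pow, powerset_univ, sum_boole, eq_comm]

theorem stmt12_general (n : ℕ) (i : ℕ) :
    (Set.ncard {Ψ | Ψ ∈ Upsilon n ∧ Ψ.ncard = i} : ℤ) =
      (∏ k ∈ Finset.range n, (1 + (X : ℤ[X]) ^ (k + 1))).coeff i := by
  have hset : {Ψ | Ψ ∈ Upsilon n ∧ Ψ.ncard = i} =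
      rootIdeal '' {S | ∑ s ∈ S, ((s : ℕ) + 1) = i} := by
    ext Ψ
    simp only [Upsilon_eq_range_rootIdeal, Set.mem_range, Set.mem_image, Set.mem_ofPred_eq]
    constructor
    · rintro ⟨⟨S, rfl⟩, hS⟩
      exact ⟨S, ncard_rootIdeal S ▸ hS, rfl⟩
    · rintro ⟨S, hS, rfl⟩
      exact ⟨⟨S, rfl⟩, ncard_rootIdeal S ▸ hS⟩
  rw [hset, Set.ncard_image_of_injective _ rootIdeal_injective, coeff_prod_one_add_X_pow,
    Set.ncard_eq_toFinset_card', Set.toFinset_ofPred]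

/-- For every `i ≥ 0`, the number of `Ψ ∈ Υ` with `|Ψ| = i` equals the coefficient of `tⁱ`
in `∏_{k=1}^{n} (1 + t^k)`; this is the coefficientwise form of the identity
`Σ_{Ψ ∈ Υ} t^{|Ψ|} = ∏_{k=1}^{n} (1 + t^k)`. -/
theorem stmt12 (n : ℕ) (hn : 1 ≤ n) (i : ℕ) :
    (Set.ncard {Ψ | Ψ ∈ Upsilon n ∧ Ψ.ncard = i} : ℤ) =
      (∏ k ∈ Finset.range n, (1 + (X : ℤ[X]) ^ (k + 1))).coeff i :=
  stmt12_general n i
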